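/- arXiv:1106.2441 — 3 statements merged into one kernel-verified Lean document; each statement's English description precedes it below -/
import Mathlib

section
/- Let f : C → ℕ. An edge-colored graph (G, C, color) of order at least w has an f-chromatic spanning forest with exactly w components if and only if for every subset R of C, ω(G − E_R(G)) ≤ w + Σ_{c ∈ R} f(c). -/
/-!
A spanning forest with `w` components is a common independent set of size `|V| - w` of two
matroids on `E(G)`: the cycle matroid, of rank `r₁ A = |V| - ω(V, A)`, and the partition matroid
of the colour classes with capacities `f`, of rank `r₂ A = ∑ c, min (f c) |A_c|`. By Edmonds'
matroid intersection theorem such a set exists as soon as `|V| - w ≤ r₁ A + r₂ (E \ A)` for every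
`A ⊆ E`. Taking for `R` the colours that `E \ A` saturates, `r₂ (E \ A)` is `∑_{c ∈ R} f c` plus
the number of the other edges of `E \ A`; adding those edges to `A` merges at most that many
components, so the hypothesis for `R` gives the bound. Conversely, deleting from `F` its at most
`∑_{c ∈ R} f c` edges coloured in `R` creates at most that many components.

Edmonds' theorem is proved by induction on `E`: if deleting an element `a` breaks the bound, then
contracting `a` keeps it (lowered by one), by uncrossing the witness with submodularity.
-/

open Finset

section

variable {α : Type*} [DecidableEq α]

structure IsMatroidRankFn (r : Finset α → ℕ) : Prop where
  empty : r ∅ = 0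
  singleton_le : ∀ a, r {a} ≤ 1
  mono : Monotone r
  submod : ∀ A B, r (A ∪ B) + r (A ∩ B) ≤ r A + r B

namespace IsMatroidRankFn

variable {r r₁ r₂ : Finset α → ℕ} {A B I J E : Finset α} {a : α} {k : ℕ}

lemma of_insert_add_le (empty : r ∅ = 0) (singleton_le : ∀ a, r {a} ≤ 1) (mono : Monotone r)
    (insert_add_le : ∀ A B, A ⊆ B → ∀ a, r (insert a B) + r A ≤ r (insert a A) + r B) :
    IsMatroidRankFn r where
  empty := empty
  singleton_le := singleton_le
  mono := mono
  submod A B := by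
    have key : ∀ D, r (A ∪ D) + r (A ∩ B) ≤ r (A ∩ B ∪ D) + r A := by
      intro D
      induction D using Finset.induction_on with
      | empty => simp [add_comm]
      | insert a D _ ih =>
        have := insert_add_le (A ∩ B ∪ D) (A ∪ D)
          (union_subset_union inter_subset_left subset_rfl) a
        simp only [union_insert]
        omega
    have := key B
    rw [show A ∩ B ∪ B = B by grind] at this
    omega

lemma insert_le_add (hr : IsMatroidRankFn r) (a : α) (A : Finset α) :
    r (insert a A) ≤ r A + r {a} := by
  have := hr.submod {a} A
  rw [← insert_eq] at this
  omega

lemma insert_le (hr : IsMatroidRankFn r) (a : α) (A : Finset α) : r (insert a A) ≤ r A + 1 :=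
  (hr.insert_le_add a A).trans (Nat.add_le_add_left (hr.singleton_le a) _)

lemma union_le (hr : IsMatroidRankFn r) (A B : Finset α) : r (A ∪ B) ≤ r A + #B := by
  induction B using Finset.induction_on with
  | empty => simp
  | insert a B ha ih =>
    rw [union_insert, card_insert_of_notMem ha]
    have := hr.insert_le a (A ∪ B)
    omega

lemma le_card (hr : IsMatroidRankFn r) (A : Finset α) : r A ≤ #A := by
  simpa [hr.empty] using hr.union_le ∅ A

lemma eq_card_of_subset (hr : IsMatroidRankFn r) (hI : r I = #I) (hJI : J ⊆ I) : r J = #J := by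
  have h := hr.union_le J (I \ J)
  rw [union_sdiff_of_subset hJI] at h
  have := card_sdiff_add_card_eq_card hJI
  have := hr.le_card J
  omega

lemma singleton_eq_one_of_lt (hr : IsMatroidRankFn r) (h : r A < r (insert a A)) : r {a} = 1 := by
  have := hr.insert_le_add a A
  have := hr.singleton_le a
  omega

lemma one_le_insert (hr : IsMatroidRankFn r) (ha : r {a} = 1) (A : Finset α) :
    1 ≤ r (insert a A) :=
  ha ▸ hr.mono (singleton_subset_iff.2 (mem_insert_self a A))

lemma contract (hr : IsMatroidRankFn r) (ha : r {a} = 1) :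
    IsMatroidRankFn fun A ↦ r (insert a A) - 1 where
  empty := by simp [ha]
  singleton_le b := by
    have := hr.insert_le_add a {b}
    have := hr.singleton_le b
    omega
  mono A B h := Nat.sub_le_sub_right (hr.mono (insert_subset_insert a h)) 1
  submod A B := by
    have := hr.submod (insert a A) (insert a B)
    rw [← insert_union_distrib, ← insert_inter_distrib] at this
    have := hr.one_le_insert ha (A ∩ B)
    have := hr.one_le_insert ha (A ∪ B)
    omega

/-- Uncrossing: if the bound fails at `A₀` once `a` is deleted, it holds with one to spare at
every `A` once `a` is contracted. -/
lemma add_one_le_insert_add_insert (h₁ : IsMatroidRankFn r₁) (h₂ : IsMatroidRankFn r₂)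
    (haE : a ∉ E) (hk : ∀ A ⊆ insert a E, k ≤ r₁ A + r₂ (insert a E \ A))
    {A₀ : Finset α} (hA₀E : A₀ ⊆ E) (hA₀ : r₁ A₀ + r₂ (E \ A₀) < k) (hAE : A ⊆ E) :
    k + 1 ≤ r₁ (insert a A) + r₂ (insert a (E \ A)) := by
  have haA₀ : a ∉ A₀ := fun h ↦ haE (hA₀E h)
  have haA : a ∉ A := fun h ↦ haE (hAE h)
  have s₁ := h₁.submod A₀ (insert a A)
  have s₂ := h₂.submod (E \ A₀) (insert a (E \ A))
  rw [show A₀ ∪ insert a A = insert a (A₀ ∪ A) by grind,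
    show A₀ ∩ insert a A = A₀ ∩ A by grind] at s₁
  rw [show E \ A₀ ∪ insert a (E \ A) = insert a E \ (A₀ ∩ A) by grind,
    show E \ A₀ ∩ insert a (E \ A) = insert a E \ insert a (A₀ ∪ A) by grind] at s₂
  have k₁ := hk (A₀ ∩ A) (inter_subset_left.trans (hA₀E.trans (subset_insert a E)))
  have k₂ := hk (insert a (A₀ ∪ A)) (insert_subset_insert a (union_subset hA₀E hAE))
  omega

theorem exists_common_indep (h₁ : IsMatroidRankFn r₁) (h₂ : IsMatroidRankFn r₂)
    (hk : ∀ A ⊆ E, k ≤ r₁ A + r₂ (E \ A)) : ∃ I ⊆ E, r₁ I = #I ∧ r₂ I = #I ∧ k ≤ #I := by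
  induction E using Finset.induction_on generalizing r₁ r₂ k with
  | empty =>
    refine ⟨∅, subset_rfl, by simp [h₁.empty], by simp [h₂.empty], ?_⟩
    simpa [h₁.empty, h₂.empty] using hk ∅ subset_rfl
  | insert a E haE ih =>
    by_cases hdel : ∀ A ⊆ E, k ≤ r₁ A + r₂ (E \ A)
    · obtain ⟨I, hIE, hI⟩ := ih h₁ h₂ hdel
      exact ⟨I, hIE.trans (subset_insert a E), hI⟩
    push Not at hdel
    obtain ⟨A₀, hA₀E, hA₀⟩ := hdel
    have haA₀ : a ∉ A₀ := fun h ↦ haE (hA₀E h)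
    have ha₁ : r₁ {a} = 1 := h₁.singleton_eq_one_of_lt (A := A₀) <| by
      have := hk (insert a A₀) (insert_subset_insert a hA₀E)
      rw [insert_sdiff_insert, sdiff_insert_of_notMem haE] at this
      omega
    have ha₂ : r₂ {a} = 1 := h₂.singleton_eq_one_of_lt (A := E \ A₀) <| by
      have := hk A₀ (hA₀E.trans (subset_insert a E))
      rw [insert_sdiff_of_notMem _ haA₀] at this
      omega
    obtain ⟨I, hIE, hI₁, hI₂, hkI⟩ := ih (h₁.contract ha₁) (h₂.contract ha₂) (k := k - 1)
      fun A hAE ↦ by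
        have := add_one_le_insert_add_insert h₁ h₂ haE hk hA₀E hA₀ hAE
        have := h₁.one_le_insert ha₁ A
        have := h₂.one_le_insert ha₂ (E \ A)
        omega
    have haI : a ∉ I := fun h ↦ haE (hIE h)
    have := h₁.one_le_insert ha₁ I
    have := h₂.one_le_insert ha₂ I
    refine ⟨insert a I, insert_subset_insert a hIE, ?_, ?_, ?_⟩ <;>
      rw [card_insert_of_notMem haI] <;> omega

end IsMatroidRankFn

end

namespace SimpleGraph

variable {V : Type*} {H H' : SimpleGraph V} {u v a b : V}

lemma reachable_sup_edge_iff :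
    (H ⊔ edge u v).Reachable a b ↔
      H.Reachable a b ∨ H.Reachable a u ∧ H.Reachable v b ∨ H.Reachable a v ∧ H.Reachable u b := by
  constructor
  · rw [reachable_iff_reflTransGen]
    intro h
    induction h with
    | refl => exact .inl .rfl
    | tail _ hbc ih =>
      rw [sup_adj, edge_adj] at hbc
      rcases hbc with hbc | ⟨⟨rfl, rfl⟩ | ⟨rfl, rfl⟩, -⟩
      · have := hbc.reachable
        grind [Reachable.trans]
      · grind [Reachable.refl]
      · grind [Reachable.refl]
  · have hH : H ≤ H ⊔ edge u v := le_sup_left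
    have huv : (H ⊔ edge u v).Reachable u v := by
      by_cases h : u = v
      · exact h ▸ .rfl
      · exact Adj.reachable (Or.inr ((edge_adj ..).2 ⟨.inl ⟨rfl, rfl⟩, h⟩))
    rintro (h | ⟨h₁, h₂⟩ | ⟨h₁, h₂⟩)
    · exact h.mono hH
    · exact (h₁.mono hH).trans (huv.trans (h₂.mono hH))
    · exact (h₁.mono hH).trans (huv.symm.trans (h₂.mono hH))

lemma fromEdgeSet_insert_mk (s : Set (Sym2 V)) (u v : V) :
    fromEdgeSet (insert s(u, v) s) = fromEdgeSet s ⊔ edge u v := by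
  rw [Set.insert_eq, fromEdgeSet_union, sup_comm]
  rfl

lemma card_connectedComponent_bot :
    Nat.card (⊥ : SimpleGraph V).ConnectedComponent = Nat.card V :=
  (Nat.card_eq_of_bijective _ ⟨fun _ _ h ↦ reachable_bot.mp (ConnectedComponent.eq.mp h),
    Quot.mk_surjective⟩).symm

lemma card_connectedComponent_sup_edge_of_reachable (h : H.Reachable u v) :
    Nat.card (H ⊔ edge u v).ConnectedComponent = Nat.card H.ConnectedComponent := by
  refine (Nat.card_eq_of_bijective _ ⟨?_, ConnectedComponent.surjective_map_ofLE le_sup_left⟩).symm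
  refine ConnectedComponent.ind₂ fun a b hab ↦ ?_
  simp only [ConnectedComponent.map_mk, ConnectedComponent.eq, Hom.coe_ofLE, id,
    reachable_sup_edge_iff] at hab ⊢
  rcases hab with hab | ⟨h₁, h₂⟩ | ⟨h₁, h₂⟩
  · exact hab
  · exact h₁.trans (h.trans h₂)
  · exact h₁.trans (h.symm.trans h₂)

variable [Finite V]

lemma card_connectedComponent_le_card (H : SimpleGraph V) :
    Nat.card H.ConnectedComponent ≤ Nat.card V :=
  card_connectedComponent_bot (V := V) ▸ ConnectedComponent.card_le_card_of_le bot_le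

lemma card_connectedComponent_sup_edge_add_one (h : ¬H.Reachable u v) :
    Nat.card (H ⊔ edge u v).ConnectedComponent + 1 = Nat.card H.ConnectedComponent := by
  classical
  set cu := H.connectedComponentMk u
  have hbij : Function.Bijective fun c : {c // c ≠ cu} ↦
      c.1.map (Hom.ofLE (le_sup_left : H ≤ H ⊔ edge u v)) := by
    constructor
    · rintro ⟨x, hx⟩ ⟨y, hy⟩ hxy
      induction x using ConnectedComponent.ind
      induction y using ConnectedComponent.ind
      simp only [ConnectedComponent.map_mk, ConnectedComponent.eq, Hom.coe_ofLE, id,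
        reachable_sup_edge_iff] at hxy
      rcases hxy with hab | ⟨h₁, -⟩ | ⟨-, h₂⟩
      · exact Subtype.ext (ConnectedComponent.eq.mpr hab)
      · exact absurd (ConnectedComponent.eq.mpr h₁) hx
      · exact absurd (ConnectedComponent.eq.mpr h₂.symm) hy
    · refine ConnectedComponent.ind fun a ↦ ?_
      by_cases ha : H.connectedComponentMk a = cu
      · refine ⟨⟨H.connectedComponentMk v, fun hv ↦ h (ConnectedComponent.eq.mp hv).symm⟩, ?_⟩
        simp only [ConnectedComponent.map_mk, ConnectedComponent.eq, Hom.coe_ofLE, id,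
          reachable_sup_edge_iff]
        exact .inr (.inr ⟨.rfl, (ConnectedComponent.eq.mp ha).symm⟩)
      · exact ⟨⟨_, ha⟩, rfl⟩
  rw [← Nat.card_eq_of_bijective _ hbij, ← Finite.card_option]
  exact Nat.card_congr (Equiv.optionSubtypeNe cu)

lemma card_connectedComponent_le_sup_edge_add_one (H : SimpleGraph V) (u v : V) :
    Nat.card H.ConnectedComponent ≤ Nat.card (H ⊔ edge u v).ConnectedComponent + 1 := by
  by_cases h : H.Reachable u v
  · rw [card_connectedComponent_sup_edge_of_reachable h]
    exact Nat.le_succ _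
  · rw [card_connectedComponent_sup_edge_add_one h]

lemma card_connectedComponent_sup_edge_add_le (hHH' : H ≤ H') (u v : V) :
    Nat.card (H ⊔ edge u v).ConnectedComponent + Nat.card H'.ConnectedComponent ≤
      Nat.card (H' ⊔ edge u v).ConnectedComponent + Nat.card H.ConnectedComponent := by
  by_cases h : H.Reachable u v
  · rw [card_connectedComponent_sup_edge_of_reachable h,
      card_connectedComponent_sup_edge_of_reachable (h.mono hHH'), add_comm]
  · have := card_connectedComponent_sup_edge_add_one h
    have := card_connectedComponent_le_sup_edge_add_one H' u v
    omega

lemma card_connectedComponent_deleteEdges_le (H : SimpleGraph V) (T : Finset (Sym2 V)) :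
    Nat.card (H.deleteEdges T).ConnectedComponent ≤ Nat.card H.ConnectedComponent + #T := by
  classical
  induction T using Finset.induction_on with
  | empty => simp
  | insert e T he ih =>
    induction e using Sym2.ind with
    | h u v =>
      have hle : H.deleteEdges T ≤ H.deleteEdges ↑(insert s(u, v) T) ⊔ edge u v := by
        intro a b hab
        simp only [deleteEdges_adj, sup_adj, edge_adj, coe_insert, Set.mem_insert_iff] at hab ⊢
        by_cases h : s(a, b) = s(u, v)
        · exact .inr ⟨Sym2.eq_iff.mp h, hab.1.ne⟩
        · exact .inl ⟨hab.1, by tauto⟩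
      have := ConnectedComponent.card_le_card_of_le hle
      have := card_connectedComponent_le_sup_edge_add_one (H.deleteEdges ↑(insert s(u, v) T)) u v
      rw [card_insert_of_notMem he]
      omega

noncomputable def graphicRank (A : Finset (Sym2 V)) : ℕ :=
  Nat.card V - Nat.card (fromEdgeSet (A : Set (Sym2 V))).ConnectedComponent

lemma isMatroidRankFn_graphicRank [DecidableEq V] : IsMatroidRankFn (graphicRank (V := V)) := by
  have hle (A : Finset (Sym2 V)) := card_connectedComponent_le_card (fromEdgeSet (A : Set (Sym2 V)))
  apply IsMatroidRankFn.of_insert_add_le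
  case empty => simp [graphicRank, card_connectedComponent_bot]
  case singleton_le =>
    refine Sym2.ind fun u v ↦ ?_
    have := card_connectedComponent_le_sup_edge_add_one (⊥ : SimpleGraph V) u v
    rw [card_connectedComponent_bot, bot_sup_eq] at this
    rw [graphicRank, coe_singleton]
    change _ - Nat.card (edge u v).ConnectedComponent ≤ 1
    omega
  case mono =>
    exact fun A B hAB ↦ Nat.sub_le_sub_left
      (ConnectedComponent.card_le_card_of_le (fromEdgeSet_mono (coe_subset.2 hAB))) _
  case insert_add_le =>
    refine fun A B hAB ↦ Sym2.ind fun u v ↦ ?_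
    have := card_connectedComponent_sup_edge_add_le (fromEdgeSet_mono (coe_subset.2 hAB)) u v
    have := hle (insert s(u, v) A)
    have := hle (insert s(u, v) B)
    have := hle A
    have := hle B
    simp only [graphicRank, coe_insert, fromEdgeSet_insert_mk] at *
    omega

lemma isAcyclic_fromEdgeSet_of_graphicRank_eq_card [DecidableEq V] {A : Finset (Sym2 V)}
    (h : graphicRank A = #A) : (fromEdgeSet (A : Set (Sym2 V))).IsAcyclic := by
  refine isAcyclic_iff_forall_adj_isBridge.2 fun u v huv hreach ↦ ?_
  have hA : s(u, v) ∈ A := ((fromEdgeSet_adj _).1 huv).1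
  rw [deleteEdges, ← fromEdgeSet_sdiff, ← coe_erase] at hreach
  have hcard := card_connectedComponent_sup_edge_of_reachable hreach
  rw [← fromEdgeSet_insert_mk, ← coe_insert, insert_erase hA] at hcard
  have hrank := isMatroidRankFn_graphicRank.le_card (A.erase s(u, v))
  have := card_erase_of_mem hA
  have := card_pos.2 ⟨_, hA⟩
  unfold graphicRank at h hrank
  omega

end SimpleGraph

section PartitionRank

variable {α ι : Type*} [Fintype ι] [DecidableEq ι] (p : α → ι) (f : ι → ℕ)

def partitionRank (A : Finset α) : ℕ := ∑ i, min (f i) #{a ∈ A | p a = i}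

lemma partitionRank_le_card (A : Finset α) : partitionRank p f A ≤ #A :=
  calc partitionRank p f A ≤ ∑ i, #{a ∈ A | p a = i} := sum_le_sum fun _ _ ↦ min_le_right _ _
    _ = #A := (card_eq_sum_card_fiberwise fun _ _ ↦ mem_univ _).symm

lemma isMatroidRankFn_partitionRank [DecidableEq α] : IsMatroidRankFn (partitionRank p f) where
  empty := by simp [partitionRank]
  singleton_le a := (partitionRank_le_card p f {a}).trans_eq (card_singleton a)
  mono _ _ h := sum_le_sum fun _ _ ↦ min_le_min_left _ (card_le_card (filter_subset_filter _ h))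
  submod A B := by
    simp only [partitionRank, ← sum_add_distrib]
    refine sum_le_sum fun i _ ↦ ?_
    rw [filter_union, filter_inter_distrib]
    have := card_union_add_card_inter {a ∈ A | p a = i} {a ∈ B | p a = i}
    have := card_le_card (subset_union_left (s₁ := {a ∈ A | p a = i}) (s₂ := {a ∈ B | p a = i}))
    have := card_le_card (subset_union_right (s₁ := {a ∈ A | p a = i}) (s₂ := {a ∈ B | p a = i}))
    omega

variable {p f}

lemma card_filter_le_of_partitionRank_eq_card {A : Finset α} (h : partitionRank p f A = #A)
    (i : ι) : #{a ∈ A | p a = i} ≤ f i := by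
  rw [card_eq_sum_card_fiberwise (fun _ _ ↦ mem_univ (p _)) (t := univ), partitionRank] at h
  have := (sum_eq_sum_iff_of_le fun i _ ↦ min_le_right (f i) #{a ∈ A | p a = i}).1 h i (mem_univ i)
  omega

variable (p f)

lemma exists_partitionRank_eq (A : Finset α) :
    ∃ R : Finset ι, partitionRank p f A = ∑ i ∈ R, f i + #{a ∈ A | p a ∉ R} := by
  set R : Finset ι := {i | f i ≤ #{a ∈ A | p a = i}}
  have hout : #{a ∈ A | p a ∉ R} = ∑ i ∈ univ.filter (· ∉ R), #{a ∈ A | p a = i} := by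
    rw [card_eq_sum_card_fiberwise (f := p) (t := univ.filter (· ∉ R))
      fun a ha ↦ mem_filter.2 ⟨mem_univ _, (mem_filter.1 ha).2⟩]
    refine sum_congr rfl fun i hi ↦ ?_
    congr 1
    ext a
    simp only [mem_filter, mem_univ, true_and] at hi ⊢
    exact ⟨fun h ↦ ⟨h.1.1, h.2⟩, fun h ↦ ⟨⟨h.1, h.2 ▸ hi⟩, h.2⟩⟩
  refine ⟨R, ?_⟩
  rw [partitionRank, ← sum_filter_add_sum_filter_not univ (· ∈ R), hout, filter_univ_mem]
  congr 1
  · exact sum_congr rfl fun i hi ↦ min_eq_left (by simpa [R] using hi)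
  · exact sum_congr rfl fun i hi ↦ min_eq_right (by simp [R] at hi; omega)

end PartitionRank

namespace SimpleGraph

variable {V C : Type*} [Finite V]

lemma card_connectedComponent_deleteEdges_le_add_sum {F G : SimpleGraph V} [Fintype F.edgeSet]
    (hFG : F ≤ G) {color : Sym2 V → C} {f : C → ℕ}
    (hF : ∀ c, {e ∈ F.edgeSet | color e = c}.ncard ≤ f c) (R : Finset C) :
    Nat.card (G.deleteEdges {e | color e ∈ R}).ConnectedComponent ≤
      Nat.card F.ConnectedComponent + ∑ c ∈ R, f c := by
  classical
  set T := {e ∈ F.edgeFinset | color e ∈ R}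
  have hle : F.deleteEdges T ≤ G.deleteEdges {e | color e ∈ R} := by
    intro a b hab
    simp only [deleteEdges_adj, coe_filter, mem_edgeFinset, Set.mem_ofPred_eq, T] at hab ⊢
    exact ⟨hFG hab.1, fun h ↦ hab.2 ⟨hab.1, h⟩⟩
  have hT : #T ≤ ∑ c ∈ R, f c := by
    rw [card_eq_sum_card_fiberwise (s := T) fun e he ↦ (mem_filter.1 he).2]
    refine sum_le_sum fun c _ ↦ le_trans ?_ (hF c)
    rw [← Set.ncard_coe_finset]
    refine Set.ncard_le_ncard (fun e he ↦ ?_) (Set.toFinite _)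
    simp only [coe_filter, mem_filter, mem_edgeFinset, Set.mem_ofPred_eq, T] at he
    exact ⟨he.1.1, he.2⟩
  calc Nat.card (G.deleteEdges {e | color e ∈ R}).ConnectedComponent
      ≤ Nat.card (F.deleteEdges T).ConnectedComponent := ConnectedComponent.card_le_card_of_le hle
    _ ≤ Nat.card F.ConnectedComponent + #T := card_connectedComponent_deleteEdges_le F T
    _ ≤ Nat.card F.ConnectedComponent + ∑ c ∈ R, f c := Nat.add_le_add_left hT _

lemma sub_le_graphicRank_add_partitionRank [DecidableEq V] [Fintype C] [DecidableEq C]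
    {G : SimpleGraph V} [Fintype G.edgeSet] {color : Sym2 V → C} {f : C → ℕ} {w : ℕ}
    (h : ∀ R : Finset C, Nat.card (G.deleteEdges {e | color e ∈ R}).ConnectedComponent ≤
      w + ∑ c ∈ R, f c) (A : Finset (Sym2 V)) :
    Nat.card V - w ≤ graphicRank A + partitionRank color f (G.edgeFinset \ A) := by
  obtain ⟨R, hR⟩ := exists_partitionRank_eq color f (G.edgeFinset \ A)
  set B := {e ∈ G.edgeFinset \ A | color e ∉ R}
  have hle : G.deleteEdges {e | color e ∈ R} ≤ fromEdgeSet ↑(A ∪ B) := by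
    rw [le_fromEdgeSet_iff, edgeSet_deleteEdges]
    intro e he
    simp only [Set.mem_sdiff, Set.mem_ofPred_eq] at he
    rw [coe_union, Set.mem_union, mem_coe, mem_coe, mem_filter, mem_sdiff, mem_edgeFinset]
    by_cases heA : e ∈ A
    · exact .inl heA
    · exact .inr ⟨⟨he.1, heA⟩, he.2⟩
  have hB := (ConnectedComponent.card_le_card_of_le hle).trans (h R)
  have hunion := isMatroidRankFn_graphicRank.union_le A B
  have := card_connectedComponent_le_card (fromEdgeSet (↑(A ∪ B) : Set (Sym2 V)))
  unfold graphicRank at hunion ⊢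
  omega

end SimpleGraph

open SimpleGraph

/-- An edge-colored graph of order at least `w` has an `f`-chromatic spanning
forest with exactly `w` components iff `ω(G − E_R(G)) ≤ w + Σ_{c ∈ R} f(c)`
for every color set `R`. -/
theorem f_chromatic_spanning_forest_iff {V C : Type*} [Fintype V] [Fintype C]
    (G : SimpleGraph V) (color : Sym2 V → C) (f : C → ℕ) (w : ℕ)
    (hw : w ≤ Fintype.card V) :
    (∃ F : SimpleGraph V, F ≤ G ∧ F.IsAcyclic ∧
        Nat.card F.ConnectedComponent = w ∧
        ∀ c : C, {e ∈ F.edgeSet | color e = c}.ncard ≤ f c) ↔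
      ∀ R : Finset C,
        Nat.card (G.deleteEdges {e | color e ∈ R}).ConnectedComponent ≤
          w + ∑ c ∈ R, f c := by
  classical
  refine ⟨fun ⟨F, hFG, _, hFw, hF⟩ R ↦
    hFw ▸ card_connectedComponent_deleteEdges_le_add_sum hFG hF R, fun h ↦ ?_⟩
  obtain ⟨I, hIE, hI₁, hI₂, hIw⟩ := isMatroidRankFn_graphicRank.exists_common_indep
    (isMatroidRankFn_partitionRank color f) (E := G.edgeFinset)
    fun A _ ↦ sub_le_graphicRank_add_partitionRank h A
  obtain ⟨J, hJI, hJ⟩ := exists_subset_card_eq hIw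
  have hJ₁ := isMatroidRankFn_graphicRank.eq_card_of_subset hI₁ hJI
  have hJ₂ := (isMatroidRankFn_partitionRank color f).eq_card_of_subset hI₂ hJI
  refine ⟨fromEdgeSet J, ?_, isAcyclic_fromEdgeSet_of_graphicRank_eq_card hJ₁, ?_, fun c ↦ ?_⟩
  · exact (fromEdgeSet_mono (coe_edgeFinset G ▸ coe_subset.2 (hJI.trans hIE))).trans_eq
      (fromEdgeSet_edgeSet G)
  · have := card_connectedComponent_le_card (fromEdgeSet (J : Set (Sym2 V)))
    rw [graphicRank, hJ, Nat.card_eq_fintype_card] at hJ₁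
    rw [Nat.card_eq_fintype_card (α := V)] at this
    omega
  · refine le_trans ?_ (card_filter_le_of_partitionRank_eq_card hJ₂ c)
    rw [← Set.ncard_coe_finset]
    refine Set.ncard_le_ncard (fun e he ↦ ?_) (Set.toFinite _)
    simp only [edgeSet_fromEdgeSet, Set.mem_ofPred_eq, Set.mem_sdiff] at he
    simpa using ⟨he.1.1, he.2⟩
end

section
/- If an edge-colored graph G has an f-chromatic spanning forest with exactly w components, then for every subset R of the color set C, ω(G − E_R(G)) ≤ w + Σ_{c ∈ R} f(c). -/
open SimpleGraph

private lemma reach_aux {V : Type*} (H : SimpleGraph V) (u v : V) {x y : V}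
    (p : H.Walk x y) :
    (H.deleteEdges {s(u,v)}).Reachable x y ∨
    ((H.deleteEdges {s(u,v)}).Reachable x u ∧ (H.deleteEdges {s(u,v)}).Reachable v y) ∨
    ((H.deleteEdges {s(u,v)}).Reachable x v ∧ (H.deleteEdges {s(u,v)}).Reachable u y) := by
  set H' := H.deleteEdges {s(u,v)} with hH'
  induction p with
  | nil => exact Or.inl (Reachable.refl _)
  | @cons a b c hadj q ih =>
    by_cases he : s(a, b) = s(u, v)
    · rw [Sym2.eq_iff] at he
      rcases he with ⟨hau, hbv⟩ | ⟨hav, hbu⟩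
      · subst hau; subst hbv
        rcases ih with h | ⟨h1, h2⟩ | ⟨h1, h2⟩
        · exact Or.inr (Or.inl ⟨Reachable.refl _, h⟩)
        · exact Or.inr (Or.inl ⟨Reachable.refl _, h2⟩)
        · exact Or.inl h2
      · subst hav; subst hbu
        rcases ih with h | ⟨h1, h2⟩ | ⟨h1, h2⟩
        · exact Or.inr (Or.inr ⟨Reachable.refl _, h⟩)
        · exact Or.inl h2
        · exact Or.inr (Or.inr ⟨Reachable.refl _, h2⟩)
    · have hab : H'.Adj a b := by
        rw [hH', SimpleGraph.deleteEdges_adj]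
        exact ⟨hadj, by simpa using he⟩
      rcases ih with h | ⟨h1, h2⟩ | ⟨h1, h2⟩
      · exact Or.inl (hab.reachable.trans h)
      · exact Or.inr (Or.inl ⟨hab.reachable.trans h1, h2⟩)
      · exact Or.inr (Or.inr ⟨hab.reachable.trans h1, h2⟩)

private lemma card_cc_deleteEdge_le {V : Type*} [Fintype V] (H : SimpleGraph V)
    (e : Sym2 V) :
    Nat.card (H.deleteEdges {e}).ConnectedComponent ≤
      Nat.card H.ConnectedComponent + 1 := by
  classical
  induction e using Sym2.inductionOn with
  | hf u v =>
    set H' := H.deleteEdges {s(u,v)} with hH'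
    set cu := H'.connectedComponentMk u with hcu
    set cv := H'.connectedComponentMk v with hcv
    let φ : H'.ConnectedComponent → H.ConnectedComponent :=
      ConnectedComponent.map (Hom.ofLE (SimpleGraph.deleteEdges_le _))
    have hφ : ∀ x : V, φ (H'.connectedComponentMk x) = H.connectedComponentMk x := by
      intro x; rfl
    let ψ : H'.ConnectedComponent → H.ConnectedComponent ⊕ Unit := fun K =>
      if K = cv ∧ cu ≠ cv then Sum.inr () else Sum.inl (φ K)
    have hinj : Function.Injective ψ := by
      intro K K' hKK'
      by_cases h1 : K = cv ∧ cu ≠ cv <;> by_cases h2 : K' = cv ∧ cu ≠ cv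
      · exact h1.1.trans h2.1.symm
      · rw [show ψ K = Sum.inr () from if_pos h1, show ψ K' = Sum.inl (φ K') from if_neg h2]
          at hKK'
        simp at hKK'
      · rw [show ψ K = Sum.inl (φ K) from if_neg h1, show ψ K' = Sum.inr () from if_pos h2]
          at hKK'
        simp at hKK'
      · rw [show ψ K = Sum.inl (φ K) from if_neg h1, show ψ K' = Sum.inl (φ K') from if_neg h2]
          at hKK'
        have hKK2 : φ K = φ K' := Sum.inl.inj hKK'
        clear hKK'
        revert h1 h2 hKK2
        refine ConnectedComponent.ind₂ ?_ K K'
        intro x y h1 h2 hKK2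
        rw [hφ, hφ, ConnectedComponent.eq] at hKK2
        obtain ⟨p⟩ := hKK2
        rcases reach_aux H u v p with h | ⟨ha, hb⟩ | ⟨ha, hb⟩
        · exact ConnectedComponent.sound h
        · -- x ~' u, v ~' y : mk x = cu, mk y = cv
          have hx : H'.connectedComponentMk x = cu := ConnectedComponent.sound ha
          have hy : H'.connectedComponentMk y = cv := ConnectedComponent.sound hb.symm
          have : cu = cv := by
            by_contra hne
            exact h2 ⟨hy, hne⟩
          rw [hx, hy, this]
        · have hx : H'.connectedComponentMk x = cv := ConnectedComponent.sound ha
          have hy : H'.connectedComponentMk y = cu := ConnectedComponent.sound hb.symm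
          have : cu = cv := by
            by_contra hne
            exact h1 ⟨hx, hne⟩
          rw [hx, hy, this]
    calc Nat.card H'.ConnectedComponent
        ≤ Nat.card (H.ConnectedComponent ⊕ Unit) :=
          Nat.card_le_card_of_injective ψ hinj
      _ = Nat.card H.ConnectedComponent + 1 := by
          rw [Nat.card_sum]; simp

private lemma card_cc_deleteEdges_le {V : Type*} [Fintype V] (H : SimpleGraph V)
    (s : Finset (Sym2 V)) :
    Nat.card (H.deleteEdges ↑s).ConnectedComponent ≤
      Nat.card H.ConnectedComponent + s.card := by
  classical
  induction s using Finset.induction generalizing H with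
  | empty => simp
  | @insert a s ha ih =>
    have heq : H.deleteEdges ↑(insert a s) = (H.deleteEdges {a}).deleteEdges ↑s := by
      rw [SimpleGraph.deleteEdges_deleteEdges, Finset.coe_insert, Set.insert_eq]
    rw [heq, Finset.card_insert_of_notMem ha]
    calc Nat.card ((H.deleteEdges {a}).deleteEdges ↑s).ConnectedComponent
        ≤ Nat.card (H.deleteEdges {a}).ConnectedComponent + s.card := ih _
      _ ≤ (Nat.card H.ConnectedComponent + 1) + s.card := by
          exact Nat.add_le_add_right (card_cc_deleteEdge_le H a) _
      _ = Nat.card H.ConnectedComponent + (s.card + 1) := by omega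

private lemma card_cc_le_of_le {V : Type*} [Fintype V] {H K : SimpleGraph V}
    (h : H ≤ K) :
    Nat.card K.ConnectedComponent ≤ Nat.card H.ConnectedComponent := by
  apply Nat.card_le_card_of_surjective
    (ConnectedComponent.map (Hom.ofLE h))
  refine ConnectedComponent.ind fun v => ⟨H.connectedComponentMk v, rfl⟩

private lemma ncard_biUnion_le' {α C : Type*} (R : Finset C) (A : C → Set α)
    (hfin : ∀ c, (A c).Finite) :
    (⋃ c ∈ R, A c).ncard ≤ ∑ c ∈ R, (A c).ncard := by
  classical
  induction R using Finset.induction with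
  | empty => simp
  | @insert a s ha ih =>
    rw [Finset.sum_insert ha]
    have : (⋃ c ∈ insert a s, A c) = A a ∪ ⋃ c ∈ s, A c := by
      simp [Set.biUnion_insert]
    rw [this]
    exact le_trans (Set.ncard_union_le _ _) (Nat.add_le_add_left ih _)

/-- If an edge-colored graph has an `f`-chromatic spanning forest with exactly
`w` components, then `ω(G − E_R(G)) ≤ w + Σ_{c ∈ R} f(c)` for every color set `R`. -/
theorem component_bound_of_forest {V C : Type*} [Fintype V] [Fintype C]
    (G : SimpleGraph V) (color : Sym2 V → C) (f : C → ℕ) (w : ℕ)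
    (F : SimpleGraph V) (hle : F ≤ G) (hacyclic : F.IsAcyclic)
    (hcomp : Nat.card F.ConnectedComponent = w)
    (hchrom : ∀ c : C, {e ∈ F.edgeSet | color e = c}.ncard ≤ f c) :
    ∀ R : Finset C,
      Nat.card (G.deleteEdges {e | color e ∈ R}).ConnectedComponent ≤
        w + ∑ c ∈ R, f c := by
  classical
  intro R
  set S : Set (Sym2 V) := {e | color e ∈ R} with hS
  set T : Set (Sym2 V) := S ∩ F.edgeSet with hT
  have hTfin : T.Finite := Set.toFinite _
  -- F.deleteEdges S = F.deleteEdges T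
  have hFdel : F.deleteEdges S = F.deleteEdges T := by
    ext a b
    simp only [SimpleGraph.deleteEdges_adj, hT, Set.mem_inter_iff, SimpleGraph.mem_edgeSet]
    tauto
  -- step 1: compare with F
  have h1 : Nat.card (G.deleteEdges S).ConnectedComponent ≤
      Nat.card (F.deleteEdges S).ConnectedComponent :=
    card_cc_le_of_le (SimpleGraph.deleteEdges_mono hle)
  -- step 2: bound F deletions
  have h2 : Nat.card (F.deleteEdges T).ConnectedComponent ≤
      Nat.card F.ConnectedComponent + hTfin.toFinset.card := by
    have := card_cc_deleteEdges_le F hTfin.toFinset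
    rwa [Set.Finite.coe_toFinset] at this
  -- step 3: bound the number of deleted edges
  have h3 : hTfin.toFinset.card ≤ ∑ c ∈ R, f c := by
    rw [← Set.ncard_eq_toFinset_card _ hTfin]
    have hsub : T ⊆ ⋃ c ∈ R, {e ∈ F.edgeSet | color e = c} := by
      intro e he
      simp only [Set.mem_iUnion, Set.mem_setOf_eq]
      exact ⟨color e, he.1, he.2, rfl⟩
    calc T.ncard ≤ (⋃ c ∈ R, {e ∈ F.edgeSet | color e = c}).ncard := by
          exact Set.ncard_le_ncard hsub (Set.toFinite _)
      _ ≤ ∑ c ∈ R, {e ∈ F.edgeSet | color e = c}.ncard :=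
          ncard_biUnion_le' R _ (fun c => Set.toFinite _)
      _ ≤ ∑ c ∈ R, f c := Finset.sum_le_sum fun c _ => hchrom c
  calc Nat.card (G.deleteEdges S).ConnectedComponent
      ≤ Nat.card (F.deleteEdges T).ConnectedComponent := by rw [← hFdel]; exact h1
    _ ≤ Nat.card F.ConnectedComponent + hTfin.toFinset.card := h2
    _ ≤ w + ∑ c ∈ R, f c := by rw [hcomp]; exact Nat.add_le_add_left h3 _
end

section
/- Let G be an edge-colored complete bipartite graph K_{n,m} with color set C, w with 1 ≤ w ≤ n+m, and f : C → ℕ with Σ_{c∈C} f(c) ≥ n+m−w. Suppose R ⊆ C, R ≠ C, is such that s := ω(G − E_R(G)) ≥ w + 1 + Σ_{c∈R} f(c). Then the number of edges of G with colors in R is at least |E(G)| − (n + m − w − Σ_{c∈R} f(c))²/4. -/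
lemma key_merge_aux (a b c d : ℕ) (h1 : 1 ≤ a + b) (h2 : 1 ≤ c + d) :
    ∃ P Q : ℕ, P + Q + 1 = a + b + c + d ∧ a * b + c * d ≤ P * Q := by
  rcases Nat.eq_zero_or_pos a with ha | ha
  · refine ⟨c, d + b - 1, by omega, ?_⟩
    rw [ha, Nat.zero_mul, Nat.zero_add]
    exact Nat.mul_le_mul_left _ (by omega)
  rcases Nat.eq_zero_or_pos c with hc | hc
  · refine ⟨a, b + d - 1, by omega, ?_⟩
    rw [hc, Nat.zero_mul, Nat.add_zero]
    exact Nat.mul_le_mul_left _ (by omega)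
  rcases Nat.eq_zero_or_pos b with hb | hb
  · refine ⟨a + c - 1, d, by omega, ?_⟩
    rw [hb, Nat.mul_zero, Nat.zero_add]
    exact Nat.mul_le_mul_right _ (by omega)
  rcases Nat.eq_zero_or_pos d with hd | hd
  · refine ⟨a + c - 1, b, by omega, ?_⟩
    rw [hd, Nat.mul_zero, Nat.add_zero]
    exact Nat.mul_le_mul_right _ (by omega)
  refine ⟨a + c, b + d - 1, by omega, ?_⟩
  obtain ⟨e, rfl⟩ : ∃ e, d = e + 1 := ⟨d - 1, by omega⟩
  have he : b + (e + 1) - 1 = b + e := by omega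
  rw [he]
  nlinarith

lemma key_sum_bound {ι : Type*} [DecidableEq ι] (a b : ι → ℕ) (S : Finset ι)
    (h : ∀ i ∈ S, 1 ≤ a i + b i) :
    ∃ P Q : ℕ, P + Q + S.card = (∑ i ∈ S, (a i + b i)) + 1 ∧
      ∑ i ∈ S, a i * b i ≤ P * Q := by
  induction S using Finset.induction_on with
  | empty => exact ⟨0, 1, by simp, by simp⟩
  | @insert j S' hj ih =>
    obtain ⟨P, Q, hPQ, hle⟩ := ih (fun i hi => h i (Finset.mem_insert_of_mem hi))
    have hcard : S'.card ≤ ∑ i ∈ S', (a i + b i) := by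
      calc S'.card = ∑ _i ∈ S', 1 := by simp
        _ ≤ _ := Finset.sum_le_sum fun i hi => h i (Finset.mem_insert_of_mem hi)
    have h1 : 1 ≤ P + Q := by omega
    obtain ⟨P', Q', hPQ', hle'⟩ := key_merge_aux (a j) (b j) P Q
      (h j (Finset.mem_insert_self _ _)) h1
    refine ⟨P', Q', ?_, ?_⟩
    · rw [Finset.card_insert_of_notMem hj, Finset.sum_insert hj]; omega
    · rw [Finset.sum_insert hj]
      calc a j * b j + ∑ i ∈ S', a i * b i ≤ a j * b j + P * Q := by omega
        _ ≤ P' * Q' := hle'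

/-- Key counting step: for an edge-colored `K_{n,m}` and a color set `R ≠ C`
with `ω(G − E_R(G)) ≥ w + 1 + Σ_{c ∈ R} f(c)`, the number of edges with colors
in `R` is at least `|E(G)| − (n+m−w−Σ_{c ∈ R} f(c))²/4`. -/
theorem key_counting_step {n m : ℕ} {C : Type*} [Fintype C] [DecidableEq C]
    (color : Sym2 (Fin n ⊕ Fin m) → C) (f : C → ℕ) (w : ℕ)
    (hw1 : 1 ≤ w) (hw2 : w ≤ n + m)
    (hf : n + m - w ≤ ∑ c : C, f c)
    (R : Finset C) (hR : R ≠ Finset.univ)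
    (hs : w + 1 + ∑ c ∈ R, f c ≤
      Nat.card ((completeBipartiteGraph (Fin n) (Fin m)).deleteEdges
        {e | color e ∈ R}).ConnectedComponent) :
    ((completeBipartiteGraph (Fin n) (Fin m)).edgeSet.ncard : ℝ) -
        ((n : ℝ) + m - w - ∑ c ∈ R, (f c : ℝ)) ^ 2 / 4 ≤
      ({e ∈ (completeBipartiteGraph (Fin n) (Fin m)).edgeSet | color e ∈ R}.ncard : ℝ) := by
  classical
  set G := completeBipartiteGraph (Fin n) (Fin m) with hG
  set G' := G.deleteEdges {e | color e ∈ R} with hG'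
  haveI : Fintype G'.ConnectedComponent := Fintype.ofFinite _
  set cm : (Fin n ⊕ Fin m) → G'.ConnectedComponent := G'.connectedComponentMk with hcm
  set aK : G'.ConnectedComponent → ℕ :=
    fun K => (Finset.univ.filter fun i : Fin n => cm (Sum.inl i) = K).card with haK
  set bK : G'.ConnectedComponent → ℕ :=
    fun K => (Finset.univ.filter fun j : Fin m => cm (Sum.inr j) = K).card with hbK
  -- component sizes sum to n and m
  have hsumA : ∑ K, aK K = n := by
    have h := Finset.card_eq_sum_card_fiberwise
      (f := fun i : Fin n => cm (Sum.inl i)) (s := Finset.univ) (t := Finset.univ)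
      (fun x _ => Finset.mem_univ _)
    simp only [Finset.card_univ, Fintype.card_fin] at h
    exact h.symm
  have hsumB : ∑ K, bK K = m := by
    have h := Finset.card_eq_sum_card_fiberwise
      (f := fun j : Fin m => cm (Sum.inr j)) (s := Finset.univ) (t := Finset.univ)
      (fun x _ => Finset.mem_univ _)
    simp only [Finset.card_univ, Fintype.card_fin] at h
    exact h.symm
  -- each component is nonempty
  have hne : ∀ K : G'.ConnectedComponent, 1 ≤ aK K + bK K := by
    intro K
    obtain ⟨v, hv⟩ := K.exists_rep
    cases v with
    | inl i =>
      have h1 : 0 < aK K :=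
        Finset.card_pos.mpr ⟨i, Finset.mem_filter.mpr ⟨Finset.mem_univ _, hv⟩⟩
      omega
    | inr j =>
      have h1 : 0 < bK K :=
        Finset.card_pos.mpr ⟨j, Finset.mem_filter.mpr ⟨Finset.mem_univ _, hv⟩⟩
      omega
  -- finset of adjacent pairs and same-component pairs
  set P : Finset (Fin n × Fin m) :=
    Finset.univ.filter fun p => G'.Adj (Sum.inl p.1) (Sum.inr p.2) with hP
  set T : Finset (Fin n × Fin m) :=
    Finset.univ.filter fun p => cm (Sum.inl p.1) = cm (Sum.inr p.2) with hT
  -- the edge set of G' is the image of P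
  have hedge : G'.edgeSet =
      (fun p : Fin n × Fin m => s(Sum.inl p.1, Sum.inr p.2)) '' ↑P := by
    ext e
    induction e using Sym2.ind with
    | _ u v =>
      constructor
      · intro he
        rw [SimpleGraph.mem_edgeSet] at he
        have hadj : G.Adj u v := (SimpleGraph.deleteEdges_adj.mp he).1
        cases u with
        | inl i =>
          cases v with
          | inl i' => simp [hG, completeBipartiteGraph] at hadj
          | inr j => exact ⟨(i, j), Finset.mem_coe.mpr (Finset.mem_filter.mpr
              ⟨Finset.mem_univ _, he⟩), rfl⟩
        | inr j =>
          cases v with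
          | inl i =>
            refine ⟨(i, j), Finset.mem_coe.mpr (Finset.mem_filter.mpr
              ⟨Finset.mem_univ _, he.symm⟩), ?_⟩
            simp [Sym2.eq_swap]
          | inr j' => simp [hG, completeBipartiteGraph] at hadj
      · rintro ⟨p, hp, hpe⟩
        rw [Finset.mem_coe, hP, Finset.mem_filter] at hp
        rw [← hpe]
        exact hp.2
  have hmapinj : Function.Injective
      (fun p : Fin n × Fin m => s(Sum.inl p.1, Sum.inr p.2)) := by
    intro p q h
    rcases Sym2.eq_iff.mp h with ⟨h1, h2⟩ | ⟨h1, h2⟩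
    · obtain ⟨p1, p2⟩ := p
      obtain ⟨q1, q2⟩ := q
      simp_all
    · simp at h1
  have hcardE' : G'.edgeSet.ncard = P.card := by
    rw [hedge, Set.ncard_image_of_injective _ hmapinj, Set.ncard_coe_finset]
  have hPT : P ⊆ T := by
    intro p hp
    rw [hP, Finset.mem_filter] at hp
    rw [hT, Finset.mem_filter]
    exact ⟨hp.1, SimpleGraph.ConnectedComponent.sound hp.2.reachable⟩
  have hTcard : T.card = ∑ K, aK K * bK K := by
    rw [Finset.card_eq_sum_card_fiberwise
      (f := fun p : Fin n × Fin m => cm (Sum.inl p.1)) (t := Finset.univ)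
      (fun x _ => Finset.mem_univ _)]
    refine Finset.sum_congr rfl fun K _ => ?_
    have hT2 : T.filter (fun p => cm (Sum.inl p.1) = K) =
        (Finset.univ.filter fun i : Fin n => cm (Sum.inl i) = K) ×ˢ
        (Finset.univ.filter fun j : Fin m => cm (Sum.inr j) = K) := by
      ext p
      simp only [hT, Finset.mem_filter, Finset.mem_product, Finset.mem_univ, true_and]
      constructor
      · rintro ⟨h1, h2⟩
        exact ⟨h2, h2 ▸ h1.symm⟩
      · rintro ⟨h1, h2⟩
        exact ⟨h1.trans h2.symm, h1⟩
    rw [hT2, Finset.card_product]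
  -- apply the numeric lemma
  obtain ⟨P0, Q0, hPQ0, hle0⟩ := key_sum_bound aK bK Finset.univ (fun K _ => hne K)
  rw [Finset.card_univ] at hPQ0
  have hsumab : ∑ K, (aK K + bK K) = n + m := by
    rw [Finset.sum_add_distrib, hsumA, hsumB]
  rw [hsumab] at hPQ0
  rw [Nat.card_eq_fintype_card] at hs
  -- so P0 + Q0 ≤ n + m - w - ∑ f
  have hkey : P0 + Q0 + w + ∑ c ∈ R, f c ≤ n + m := by omega
  -- relate edge sets
  have hdel : G'.edgeSet = G.edgeSet \ {e | color e ∈ R} :=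
    SimpleGraph.edgeSet_deleteEdges _
  have hdiff : G.edgeSet \ {e ∈ G.edgeSet | color e ∈ R} = G'.edgeSet := by
    rw [hdel]
    ext e
    simp only [Set.mem_diff, Set.mem_setOf_eq, Set.mem_sep_iff]
    tauto
  have hsplit : (G.edgeSet \ {e ∈ G.edgeSet | color e ∈ R}).ncard +
      {e ∈ G.edgeSet | color e ∈ R}.ncard = G.edgeSet.ncard :=
    Set.ncard_diff_add_ncard_of_subset (Set.sep_subset _ _) (Set.toFinite _)
  rw [hdiff, hcardE'] at hsplit
  -- chain of nat inequalities
  have hchain : G.edgeSet.ncard ≤ {e ∈ G.edgeSet | color e ∈ R}.ncard + P0 * Q0 := by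
    have h1 : P.card ≤ T.card := Finset.card_le_card hPT
    omega
  -- now real arithmetic
  have hXnn : ((P0 : ℝ) + Q0) ≤ (n : ℝ) + m - w - ∑ c ∈ R, (f c : ℝ) := by
    have : ((P0 + Q0 + w + ∑ c ∈ R, f c : ℕ) : ℝ) ≤ ((n + m : ℕ) : ℝ) :=
      Nat.cast_le.mpr hkey
    push_cast at this
    linarith
  have hsq : ((P0 : ℝ) + Q0) ^ 2 ≤ ((n : ℝ) + m - w - ∑ c ∈ R, (f c : ℝ)) ^ 2 :=
    pow_le_pow_left₀ (by positivity) hXnn 2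
  have hPQreal : ((P0 * Q0 : ℕ) : ℝ) ≤ ((n : ℝ) + m - w - ∑ c ∈ R, (f c : ℝ)) ^ 2 / 4 := by
    push_cast
    nlinarith [sq_nonneg ((P0 : ℝ) - Q0)]
  have hchainreal : ((G.edgeSet.ncard : ℕ) : ℝ) ≤
      (({e ∈ G.edgeSet | color e ∈ R}.ncard : ℕ) : ℝ) + ((P0 * Q0 : ℕ) : ℝ) := by
    rw [← Nat.cast_add]
    exact Nat.cast_le.mpr hchain
  linarith
end
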